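/- Let U and U₁ be separable real Hilbert spaces, let ι : U → U₁ be a Hilbert–Schmidt operator, let (e_j)_{j∈ℕ} be a Hilbert basis of U, and let (ξ_j)_{j∈ℕ} be independent standard real Gaussian random variables (mean 0, variance 1). Then the series Σ_j ξ_j · ι(e_j) converges in L²(Ω; U₁) to a random variable W₁ with E‖W₁‖²_{U₁} = Σ_j ‖ι(e_j)‖²_{U₁} = ‖ι‖²_{HS}. (This underlies the convergence of the cylindrical Wiener series in a larger space U₁ ⊃ U when the inclusion is Hilbert–Schmidt.) -/

import Mathlib

/-!
The terms `ξ_j • ι(e_j)` form an orthogonal family in `L²(Ω; U₁)`: independence and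
mean zero kill the mixed moments `E[ξ_i ξ_j]`, and unit variance gives
`‖ξ_j • ι(e_j)‖_{L²} = ‖ι(e_j)‖`. By Pythagoras the partial sums are then Cauchy in the complete
space `L²(Ω; U₁)` exactly when `Σ_j ‖ι(e_j)‖²` converges, and the limit has squared norm
`Σ_j ‖ι(e_j)‖²`.
-/

open MeasureTheory ProbabilityTheory Filter Topology
open scoped NNReal InnerProductSpace

section Orthogonal

variable {𝕜 E ι : Type*} [RCLike 𝕜] [NormedAddCommGroup E] [InnerProductSpace 𝕜 E] {g : ι → E}

theorem orthogonalFamily_span_singleton (hg : Pairwise fun i j => ⟪g i, g j⟫_𝕜 = 0) :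
    OrthogonalFamily 𝕜 (fun i => 𝕜 ∙ g i) fun i => (𝕜 ∙ g i).subtypeₗᵢ :=
  OrthogonalFamily.of_pairwise fun _ _ hij =>
    Submodule.isOrtho_span.2 <| by rintro _ rfl _ rfl; exact hg hij

theorem norm_sum_sq_eq_sum_norm_sq_of_pairwise_inner_eq_zero
    (hg : Pairwise fun i j => ⟪g i, g j⟫_𝕜 = 0) (s : Finset ι) :
    ‖∑ i ∈ s, g i‖ ^ 2 = ∑ i ∈ s, ‖g i‖ ^ 2 :=
  (orthogonalFamily_span_singleton hg).norm_sum
    (fun i => ⟨g i, Submodule.mem_span_singleton_self _⟩) s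

theorem summable_of_pairwise_inner_eq_zero [CompleteSpace E]
    (hg : Pairwise fun i j => ⟪g i, g j⟫_𝕜 = 0) (hsq : Summable fun i => ‖g i‖ ^ 2) :
    Summable g :=
  ((orthogonalFamily_span_singleton hg).summable_iff_norm_sq_summable
    (fun i => ⟨g i, Submodule.mem_span_singleton_self _⟩)).2 hsq

theorem hasSum_norm_sq_of_pairwise_inner_eq_zero [CompleteSpace E]
    (hg : Pairwise fun i j => ⟪g i, g j⟫_𝕜 = 0) (hsq : Summable fun i => ‖g i‖ ^ 2) :
    HasSum (fun i => ‖g i‖ ^ 2) (‖∑' i, g i‖ ^ 2) := by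
  have h := ((summable_of_pairwise_inner_eq_zero hg hsq).hasSum.norm).pow 2
  simp only [norm_sum_sq_eq_sum_norm_sq_of_pairwise_inner_eq_zero hg] at h
  exact h

end Orthogonal

namespace MeasureTheory.L2

variable {α E : Type*} [MeasurableSpace α] {μ : Measure α}
  [NormedAddCommGroup E] [InnerProductSpace ℝ E]

theorem integral_norm_sq_eq_of_ae_eq {f : Lp E 2 μ} {φ : α → E} (hf : f =ᵐ[μ] φ) :
    ∫ a, ‖φ a‖ ^ 2 ∂μ = ‖f‖ ^ 2 := by
  rw [← real_inner_self_eq_norm_sq, inner_def]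
  refine integral_congr_ae ?_
  filter_upwards [hf] with a ha
  rw [ha, real_inner_self_eq_norm_sq]

theorem real_inner_toLp {f g : α → ℝ} (hf : MemLp f 2 μ) (hg : MemLp g 2 μ) :
    ⟪hf.toLp f, hg.toLp g⟫_ℝ = ∫ a, f a * g a ∂μ := by
  rw [inner_def]
  refine integral_congr_ae ?_
  filter_upwards [hf.coeFn_toLp, hg.coeFn_toLp] with a hfa hga
  simp [hfa, hga, mul_comm]

theorem inner_toLp_smul_const {f g : α → ℝ} (hf : MemLp f 2 μ) (hg : MemLp g 2 μ) (v w : E) :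
    ⟪((memLp_top_const v).smul (r := 2) hf).toLp (f • fun _ => v),
      ((memLp_top_const w).smul (r := 2) hg).toLp (g • fun _ => w)⟫_ℝ =
      ⟪hf.toLp f, hg.toLp g⟫_ℝ * ⟪v, w⟫_ℝ := by
  rw [real_inner_toLp, inner_def, ← integral_mul_const]
  refine integral_congr_ae ?_
  filter_upwards [((memLp_top_const v).smul (r := 2) hf).coeFn_toLp,
    ((memLp_top_const w).smul (r := 2) hg).coeFn_toLp] with a hfa hga
  simp only [hfa, hga, Pi.smul_apply', real_inner_smul_left, real_inner_smul_right]
  ring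

end MeasureTheory.L2

namespace ProbabilityTheory

variable {Ω : Type*} [MeasurableSpace Ω] {P : Measure Ω}

theorem HasLaw.memLp_of_gaussianReal {X : Ω → ℝ} {m : ℝ} {v : ℝ≥0}
    (hX : HasLaw X (gaussianReal m v) P) (p : ℝ≥0) : MemLp X p P := by
  have h := memLp_id_gaussianReal (μ := m) (v := v) p
  rwa [← hX.map_eq, memLp_map_measure_iff aestronglyMeasurable_id hX.aemeasurable] at h

theorem HasLaw.integral_eq_of_gaussianReal {X : Ω → ℝ} {m : ℝ} {v : ℝ≥0}
    (hX : HasLaw X (gaussianReal m v) P) : ∫ ω, X ω ∂P = m := by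
  rw [hX.integral_eq, integral_id_gaussianReal]

theorem HasLaw.integral_sq_eq_of_gaussianReal_zero {X : Ω → ℝ} {v : ℝ≥0}
    (hX : HasLaw X (gaussianReal 0 v) P) : ∫ ω, X ω ^ 2 ∂P = v := by
  rw [← variance_of_integral_eq_zero hX.aemeasurable hX.integral_eq_of_gaussianReal,
    hX.variance_eq, variance_id_gaussianReal]

theorem orthonormal_toLp_of_iIndepFun {ι : Type*} {ξ : ι → Ω → ℝ} (hξ : ∀ i, MemLp (ξ i) 2 P)
    (hind : iIndepFun ξ P) (hmean : ∀ i, ∫ ω, ξ i ω ∂P = 0)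
    (hsq : ∀ i, ∫ ω, ξ i ω ^ 2 ∂P = 1) :
    Orthonormal ℝ fun i => (hξ i).toLp (ξ i) := by
  classical
  refine orthonormal_iff_ite.2 fun i j => ?_
  rw [L2.real_inner_toLp]
  split_ifs with hij
  · subst hij
    simpa only [sq] using hsq i
  · rw [(hind.indepFun hij).integral_fun_mul_eq_mul_integral (hξ i).1 (hξ j).1, hmean, zero_mul]

end ProbabilityTheory

section RandomSeries

variable {Ω E : Type*} [MeasurableSpace Ω] {P : Measure Ω}
  [NormedAddCommGroup E] [InnerProductSpace ℝ E] [CompleteSpace E]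

theorem exists_tendsto_integral_norm_sq_sum_smul_sub_of_orthonormal {ξ : ℕ → Ω → ℝ}
    (hξ : ∀ j, MemLp (ξ j) 2 P) (hon : Orthonormal ℝ fun j => (hξ j).toLp (ξ j))
    {v : ℕ → E} (hv : Summable fun j => ‖v j‖ ^ 2) :
    ∃ W : Ω → E, AEStronglyMeasurable W P ∧
      Tendsto (fun n => ∫ ω, ‖(∑ j ∈ Finset.range n, ξ j ω • v j) - W ω‖ ^ 2 ∂P)
        atTop (𝓝 0) ∧
      ∫ ω, ‖W ω‖ ^ 2 ∂P = ∑' j, ‖v j‖ ^ 2 := by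
  have hmem : ∀ j, MemLp (ξ j • fun _ => v j) 2 P := fun j =>
    (memLp_top_const (v j)).smul (r := 2) (hξ j)
  set g : ℕ → Lp E 2 P := fun j => (hmem j).toLp _
  have hinner : ∀ i j, ⟪g i, g j⟫_ℝ = ⟪(hξ i).toLp (ξ i), (hξ j).toLp (ξ j)⟫_ℝ * ⟪v i, v j⟫_ℝ :=
    fun i j => L2.inner_toLp_smul_const (hξ i) (hξ j) (v i) (v j)
  have horth : Pairwise fun i j => ⟪g i, g j⟫_ℝ = 0 := fun i j hij => by
    simp only [hinner, hon.2 hij, zero_mul]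
  have hnorm : (fun j => ‖g j‖ ^ 2) = fun j => ‖v j‖ ^ 2 := funext fun j => by
    rw [← real_inner_self_eq_norm_sq, hinner, real_inner_self_eq_norm_sq, hon.1, one_pow, one_mul,
      real_inner_self_eq_norm_sq]
  rw [← hnorm] at hv
  set S := ∑' j, g j
  have hS : HasSum g S := (summable_of_pairwise_inner_eq_zero horth hv).hasSum
  refine ⟨S, Lp.aestronglyMeasurable S, ?_, ?_⟩
  · have hpartial : ∀ n, ∫ ω, ‖(∑ j ∈ Finset.range n, ξ j ω • v j) - S ω‖ ^ 2 ∂P =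
        ‖(∑ j ∈ Finset.range n, g j) - S‖ ^ 2 := fun n => by
      refine L2.integral_norm_sq_eq_of_ae_eq ?_
      filter_upwards [Lp.coeFn_sub (∑ j ∈ Finset.range n, g j) S,
        Lp.coeFn_fun_finsetSum (Finset.range n) g,
        ae_all_iff.2 fun j => (hmem j).coeFn_toLp] with ω hsub hsum hg
      simp only [hsub, Pi.sub_apply, hsum, g, hg, Pi.smul_apply']
    simpa only [hpartial, sub_self, norm_zero, ne_eq, OfNat.ofNat_ne_zero, not_false_eq_true,
      zero_pow] using ((hS.tendsto_sum_nat.sub_const S).norm).pow 2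
  · rw [L2.integral_norm_sq_eq_of_ae_eq (Filter.EventuallyEq.refl _ _), ← hnorm]
    exact (hasSum_norm_sq_of_pairwise_inner_eq_zero horth hv).tsum_eq.symm

end RandomSeries

theorem cylindrical_wiener_series_convergence_general
    {U : Type*} [NormedAddCommGroup U] [InnerProductSpace ℝ U]
    {U₁ : Type*} [NormedAddCommGroup U₁] [InnerProductSpace ℝ U₁] [CompleteSpace U₁]
    {Ω : Type*} [MeasurableSpace Ω] (P : Measure Ω)
    (ι : U →L[ℝ] U₁)
    (e : HilbertBasis ℕ ℝ U)
    (hHS : Summable fun j => ‖ι (e j)‖ ^ 2)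
    (ξ : ℕ → Ω → ℝ) (hmeas : ∀ j, Measurable (ξ j))
    (hindep : iIndepFun ξ P)
    (hgauss : ∀ j, Measure.map (ξ j) P = gaussianReal 0 1) :
    ∃ W₁ : Ω → U₁, AEStronglyMeasurable W₁ P ∧
      Tendsto (fun n => ∫ ω,
          ‖(∑ j ∈ Finset.range n, ξ j ω • ι (e j)) - W₁ ω‖ ^ 2 ∂P)
        atTop (nhds 0) ∧
      ∫ ω, ‖W₁ ω‖ ^ 2 ∂P = ∑' j, ‖ι (e j)‖ ^ 2 := by
  have hlaw : ∀ j, HasLaw (ξ j) (gaussianReal 0 1) P := fun j => ⟨(hmeas j).aemeasurable, hgauss j⟩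
  have hξ : ∀ j, MemLp (ξ j) 2 P := fun j => (hlaw j).memLp_of_gaussianReal 2
  have hon : Orthonormal ℝ fun j => (hξ j).toLp (ξ j) :=
    orthonormal_toLp_of_iIndepFun hξ hindep (fun j => (hlaw j).integral_eq_of_gaussianReal)
      (fun j => by simpa using (hlaw j).integral_sq_eq_of_gaussianReal_zero)
  exact exists_tendsto_integral_norm_sq_sum_smul_sub_of_orthonormal hξ hon hHS

/-- Convergence of the cylindrical Wiener series in a larger space: if `ι : U → U₁` is a
Hilbert–Schmidt operator (i.e. `Σ_j ‖ι(e_j)‖² < ∞` for a Hilbert basis `(e_j)` of `U`)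
and `(ξ_j)` are independent standard real Gaussians, then `Σ_j ξ_j · ι(e_j)` converges in
`L²(Ω; U₁)` to some `W₁` with `E‖W₁‖² = Σ_j ‖ι(e_j)‖² = ‖ι‖²_HS`. -/
theorem cylindrical_wiener_series_convergence
    {U : Type*} [NormedAddCommGroup U] [InnerProductSpace ℝ U] [CompleteSpace U]
    [SecondCountableTopology U]
    {U₁ : Type*} [NormedAddCommGroup U₁] [InnerProductSpace ℝ U₁] [CompleteSpace U₁]
    [SecondCountableTopology U₁]
    {Ω : Type*} [MeasurableSpace Ω] (P : Measure Ω) [IsProbabilityMeasure P]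
    (ι : U →L[ℝ] U₁)
    (e : HilbertBasis ℕ ℝ U)
    (hHS : Summable fun j => ‖ι (e j)‖ ^ 2)
    (ξ : ℕ → Ω → ℝ) (hmeas : ∀ j, Measurable (ξ j))
    (hindep : iIndepFun ξ P)
    (hgauss : ∀ j, Measure.map (ξ j) P = gaussianReal 0 1) :
    ∃ W₁ : Ω → U₁, AEStronglyMeasurable W₁ P ∧
      Tendsto (fun n => ∫ ω,
          ‖(∑ j ∈ Finset.range n, ξ j ω • ι (e j)) - W₁ ω‖ ^ 2 ∂P)
        atTop (nhds 0) ∧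
      ∫ ω, ‖W₁ ω‖ ^ 2 ∂P = ∑' j, ‖ι (e j)‖ ^ 2 :=
  cylindrical_wiener_series_convergence_general P ι e hHS ξ hmeas hindep hgauss
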